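/- Let g be a Lie algebra that splits as a direct sum of vector spaces g = g₊ ⊕ g₋ with g₊ and g₋ Lie subalgebras. Let P₊, P₋ be the projections onto g₊, g₋ and define R := (P₊ − P₋)/2. Then the R-bracket [a, b]_R := [R a, b] + [a, R b] is a Lie bracket on g, i.e. it is bilinear, antisymmetric, and satisfies the Jacobi identity. -/

import Mathlib

/-!
Writing `a = a₊ + a₋`, the R-bracket collapses to `[a, b]_R = [a₊, b₊] - [a₋, b₋]`. Since `g₊` and
`g₋` are subalgebras, the two terms of this expression are its `g₊`- and `g₋`-components, so
the Jacobi sum of `[·,·]_R` splits into the Jacobi sums of `g₊` and of `g₋`, both of which vanish.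
-/

namespace LieAlgebra

def splitBracket {K L : Type*} [CommRing K] [LieRing L] [LieAlgebra K L] (P Q : L →ₗ[K] L)
    (a b : L) : L :=
  ⁅P a, P b⁆ - ⁅Q a, Q b⁆

theorem half_smul_sub_lie_add_lie_half_smul_sub {K L : Type*} [Field K] [NeZero (2 : K)]
    [LieRing L] [LieAlgebra K L] {P Q : L →ₗ[K] L} (hsum : ∀ a, P a + Q a = a) (a b : L) :
    ⁅(1 / 2 : K) • (P a - Q a), b⁆ + ⁅a, (1 / 2 : K) • (P b - Q b)⁆ = splitBracket P Q a b := by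
  have h : (1 / 2 : K) * 2 = 1 := one_div_mul_cancel two_ne_zero
  calc _ = ⁅(1 / 2 : K) • (P a - Q a), P b + Q b⁆ + ⁅P a + Q a, (1 / 2 : K) • (P b - Q b)⁆ := by
        rw [hsum, hsum]
    _ = splitBracket P Q a b := by
        simp only [splitBracket, smul_lie, lie_smul, sub_lie, lie_sub, lie_add, add_lie]
        linear_combination (norm := module) h • (⁅P a, P b⁆ - ⁅Q a, Q b⁆)

variable {K L : Type*} [CommRing K] [LieRing L] [LieAlgebra K L]

section Bilinear

variable (P Q : L →ₗ[K] L)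

theorem splitBracket_add_left (a b c : L) :
    splitBracket P Q (a + b) c = splitBracket P Q a c + splitBracket P Q b c := by
  simp only [splitBracket, map_add, add_lie]
  abel

theorem splitBracket_smul_left (t : K) (a b : L) :
    splitBracket P Q (t • a) b = t • splitBracket P Q a b := by
  simp only [splitBracket, map_smul, smul_lie, smul_sub]

theorem splitBracket_add_right (a b c : L) :
    splitBracket P Q a (b + c) = splitBracket P Q a b + splitBracket P Q a c := by
  simp only [splitBracket, map_add, lie_add]
  abel

theorem splitBracket_smul_right (t : K) (a b : L) :
    splitBracket P Q a (t • b) = t • splitBracket P Q a b := by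
  simp only [splitBracket, map_smul, lie_smul, smul_sub]

theorem splitBracket_swap (a b : L) : splitBracket P Q a b = -splitBracket P Q b a := by
  rw [splitBracket, splitBracket, ← lie_skew (P a), ← lie_skew (Q a)]
  abel

end Bilinear

section Splitting

variable {P Q : L →ₗ[K] L} (hsum : ∀ a, P a + Q a = a)
  (hsubP : ∀ a b, Q ⁅P a, P b⁆ = 0) (hsubQ : ∀ a b, P ⁅Q a, Q b⁆ = 0)
include hsum hsubP hsubQ

theorem map_splitBracket_left (a b : L) : P (splitBracket P Q a b) = ⁅P a, P b⁆ := by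
  rw [splitBracket, map_sub, hsubQ, sub_zero]
  simpa only [hsubP, add_zero] using hsum ⁅P a, P b⁆

theorem map_splitBracket_right (a b : L) : Q (splitBracket P Q a b) = -⁅Q a, Q b⁆ := by
  rw [splitBracket, map_sub, hsubP, zero_sub]
  simpa only [hsubQ, zero_add] using congrArg Neg.neg (hsum ⁅Q a, Q b⁆)

theorem splitBracket_splitBracket (a b c : L) :
    splitBracket P Q a (splitBracket P Q b c) = ⁅P a, ⁅P b, P c⁆⁆ + ⁅Q a, ⁅Q b, Q c⁆⁆ := by
  rw [splitBracket, map_splitBracket_left hsum hsubP hsubQ,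
    map_splitBracket_right hsum hsubP hsubQ, lie_neg, sub_neg_eq_add]

theorem splitBracket_jacobi (a b c : L) :
    splitBracket P Q a (splitBracket P Q b c) + splitBracket P Q b (splitBracket P Q c a) +
      splitBracket P Q c (splitBracket P Q a b) = 0 := by
  simp only [splitBracket_splitBracket hsum hsubP hsubQ]
  linear_combination (norm := abel) lie_jacobi (P a) (P b) (P c) + lie_jacobi (Q a) (Q b) (Q c)

end Splitting

end LieAlgebra

open LieAlgebra in
theorem r_matrix_bracket_is_lie_general {g : Type*} [LieRing g] [LieAlgebra ℝ g]
    (Pp Pm : g →ₗ[ℝ] g)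
    (hsum : ∀ a, Pp a + Pm a = a)
    (hsubp : ∀ a b, Pm ⁅Pp a, Pp b⁆ = 0)
    (hsubm : ∀ a b, Pp ⁅Pm a, Pm b⁆ = 0)
    (R : g → g) (hR : ∀ a, R a = (1 / 2 : ℝ) • (Pp a - Pm a))
    (bR : g → g → g) (hbR : ∀ a b, bR a b = ⁅R a, b⁆ + ⁅a, R b⁆) :
    (∀ a b c, bR (a + b) c = bR a c + bR b c) ∧
    (∀ (t : ℝ) a b, bR (t • a) b = t • bR a b) ∧
    (∀ a b c, bR a (b + c) = bR a b + bR a c) ∧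
    (∀ (t : ℝ) a b, bR a (t • b) = t • bR a b) ∧
    (∀ a b, bR a b = -bR b a) ∧
    (∀ a b c, bR a (bR b c) + bR b (bR c a) + bR c (bR a b) = 0) := by
  obtain rfl : bR = splitBracket Pp Pm := by
    ext a b
    rw [hbR, hR, hR, half_smul_sub_lie_add_lie_half_smul_sub hsum]
  exact ⟨splitBracket_add_left Pp Pm, splitBracket_smul_left Pp Pm,
    splitBracket_add_right Pp Pm, splitBracket_smul_right Pp Pm, splitBracket_swap Pp Pm,
    splitBracket_jacobi hsum hsubp hsubm⟩

/-- classical R-matrix lemma: let `g = g₊ ⊕ g₋` be a Lie algebra split as a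
direct sum of vector spaces into two Lie subalgebras, with projections `P₊, P₋`, and let
`R := (P₊ − P₋)/2`.  Then the R-bracket `[a,b]_R := [Ra, b] + [a, Rb]` is a Lie bracket:
bilinear, antisymmetric, and satisfying the Jacobi identity. -/
theorem r_matrix_bracket_is_lie {g : Type*} [LieRing g] [LieAlgebra ℝ g]
    (Pp Pm : g →ₗ[ℝ] g)
    (hsum : ∀ a, Pp a + Pm a = a)
    (hpp : ∀ a, Pp (Pp a) = Pp a) (hmm : ∀ a, Pm (Pm a) = Pm a)
    (hpm : ∀ a, Pp (Pm a) = 0) (hmp : ∀ a, Pm (Pp a) = 0)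
    (hsubp : ∀ a b, Pm ⁅Pp a, Pp b⁆ = 0)
    (hsubm : ∀ a b, Pp ⁅Pm a, Pm b⁆ = 0)
    (R : g → g) (hR : ∀ a, R a = (1 / 2 : ℝ) • (Pp a - Pm a))
    (bR : g → g → g) (hbR : ∀ a b, bR a b = ⁅R a, b⁆ + ⁅a, R b⁆) :
    (∀ a b c, bR (a + b) c = bR a c + bR b c) ∧
    (∀ (t : ℝ) a b, bR (t • a) b = t • bR a b) ∧
    (∀ a b c, bR a (b + c) = bR a b + bR a c) ∧
    (∀ (t : ℝ) a b, bR a (t • b) = t • bR a b) ∧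
    (∀ a b, bR a b = -bR b a) ∧
    (∀ a b c, bR a (bR b c) + bR b (bR c a) + bR c (bR a b) = 0) :=
  r_matrix_bracket_is_lie_general Pp Pm hsum hsubp hsubm R hR bR hbR
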